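/- Assume ‖Z + θM‖_{L^q} > 0 for every θ ∈ [0,1]. Then ‖Z + M‖_{L^q}^p ≤ ‖Z‖_{L^q}^p + p ‖Z‖_{L^q}^{p−q} ⟨|Z|^{q−2}Z, M⟩ + p|p−q| ∫₀¹ ‖Z + θM‖_{L^q}^{p−2q} ⟨|Z + θM|^{q−2}(Z + θM), M⟩² dθ + p(q−1) ∫₀¹ ‖Z + θM‖_{L^q}^{p−q} ⟨|Z + θM|^{q−2}, M²⟩ dθ. (This is the second-order Taylor inequality for g(θ) = ‖Z + θM‖_{L^q}^p used to control the discrete stochastic convolution.) -/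

import Mathlib

/-!
Write `F θ = ∫ |Z + θM|^q`, `A θ = ⟨|Z + θM|^{q-2}(Z + θM), M⟩` and `B θ = ⟨|Z + θM|^{q-2}, M²⟩`.
Differentiating under the integral sign, with the derivatives dominated near `θ₀` through Hölder's
inequality by `(|Z| + (|θ₀| + 1)|M|)^r |M|^j` with `r + j = q`, gives `F' = q A` and
`A' = (q - 1) B`. Hence `g = F^{p/q}` has `g' = p F^{(p-q)/q} A` and
`g'' = p (p - q) F^{(p-2q)/q} A² + p (q - 1) F^{(p-q)/q} B`, which is bounded by the nonnegative
integrand `h` of the remainder terms. Integrating `g'' ≤ h` twice gives `g 1 ≤ g 0 + g' 0 + ∫₀¹ h`,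
where `h ≥ 0` lets the inner integral run over all of `[0, 1]`.
-/

open MeasureTheory Set

theorem abs_abs_rpow_mul_self {p : ℝ} (hp : p + 1 ≠ 0) (t : ℝ) :
    |(|t| ^ p * t)| = |t| ^ (p + 1) := by
  rw [abs_mul, abs_of_nonneg (by positivity), Real.rpow_add_one' (abs_nonneg t) hp]

theorem hasDerivAt_abs_rpow_mul_self {p : ℝ} (hp : 0 ≤ p) (t : ℝ) :
    HasDerivAt (fun s => |s| ^ p * s) ((p + 1) * |t| ^ p) t := by
  have hcont : Continuous fun s : ℝ => |s| ^ p := continuous_abs.rpow_const fun _ => Or.inr hp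
  refine hasDerivAt_of_hasDerivAt_of_ne' (g := fun s => (p + 1) * |s| ^ p) (x := 0)
    (fun y hy => ?_) (hcont.mul continuous_id).continuousAt
    (continuous_const.mul hcont).continuousAt t
  have habs : |y| ≠ 0 := abs_ne_zero.2 hy
  refine (((hasDerivAt_abs hy).rpow_const (Or.inl habs)).mul (hasDerivAt_id y)).congr_deriv ?_
  rw [id_eq, mul_one, Real.rpow_sub_one habs]
  field_simp
  linear_combination p * sign_mul_self y

theorem abs_add_mul_le {θ C : ℝ} (hθ : |θ| ≤ C) (z m : ℝ) : |z + θ * m| ≤ |z| + C * |m| :=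
  calc |z + θ * m| ≤ |z| + |θ| * |m| := (abs_add_le _ _).trans_eq (by rw [abs_mul])
    _ ≤ |z| + C * |m| := by gcongr

theorem abs_le_of_mem_ball {θ θ₀ : ℝ} (hθ : θ ∈ Metric.ball θ₀ 1) : |θ| ≤ |θ₀| + 1 := by
  rw [Metric.mem_ball, Real.dist_eq] at hθ
  linarith [abs_sub_abs_le_abs_sub θ θ₀]

theorem le_add_mul_deriv_add_integral_of_hasDerivAt {g g' g'' h : ℝ → ℝ} {a b : ℝ}
    (hab : a ≤ b) (hg : ∀ θ ∈ Icc a b, HasDerivAt g (g' θ) θ)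
    (hg' : ∀ θ ∈ Icc a b, HasDerivAt g' (g'' θ) θ)
    (hle : ∀ θ ∈ Ioo a b, g'' θ ≤ h θ) (h0 : ∀ θ ∈ Icc a b, 0 ≤ h θ)
    (hint : IntervalIntegrable h volume a b) :
    g b ≤ g a + (b - a) * (g' a + ∫ θ in a..b, h θ) := by
  have hint' : IntegrableOn h (Icc a b) :=
    (intervalIntegrable_iff_integrableOn_Icc_of_le hab).1 hint
  have hcont {f f' : ℝ → ℝ} (hf : ∀ θ ∈ Icc a b, HasDerivAt f (f' θ) θ) :
      ContinuousOn f (Icc a b) :=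
    fun θ hθ => (hf θ hθ).continuousAt.continuousWithinAt
  have hderiv_le : ∀ θ ∈ Ioo a b, g' θ ≤ g' a + ∫ s in a..b, h s := by
    intro θ hθ
    have hsub : Icc a θ ⊆ Icc a b := Icc_subset_Icc le_rfl hθ.2.le
    have h_sub_le : g' θ - g' a ≤ ∫ s in a..θ, h s :=
      intervalIntegral.sub_le_integral_of_hasDeriv_right_of_le hθ.1.le ((hcont hg').mono hsub)
        (fun s hs => (hg' s (hsub (Ioo_subset_Icc_self hs))).hasDerivWithinAt)
        (hint'.mono_set hsub) fun s hs => hle s ⟨hs.1, hs.2.trans hθ.2⟩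
    have h_mono : ∫ s in a..θ, h s ≤ ∫ s in a..b, h s :=
      intervalIntegral.integral_mono_interval le_rfl hθ.1.le hθ.2.le
        ((ae_restrict_iff' measurableSet_Ioc).2 (ae_of_all _ fun s hs => h0 s ⟨hs.1.le, hs.2⟩))
        hint
    linarith
  have := intervalIntegral.sub_le_integral_of_hasDeriv_right_of_le hab (hcont hg)
    (fun s hs => (hg s (Ioo_subset_Icc_self hs)).hasDerivWithinAt)
    (integrableOn_const measure_Icc_lt_top.ne) hderiv_le
  rw [intervalIntegral.integral_const, smul_eq_mul] at this
  linarith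

section RpowTaylor

variable {F A B : ℝ → ℝ} {p q : ℝ}

theorem rpow_div_taylor_le (hp : 0 ≤ p) (hq : 1 ≤ q)
    (hF : ∀ θ ∈ Icc (0:ℝ) 1, HasDerivAt F (q * A θ) θ)
    (hA : ∀ θ ∈ Icc (0:ℝ) 1, HasDerivAt A ((q - 1) * B θ) θ)
    (hB : ContinuousOn B (Icc 0 1)) (hB0 : ∀ θ ∈ Icc (0:ℝ) 1, 0 ≤ B θ)
    (hFpos : ∀ θ ∈ Icc (0:ℝ) 1, 0 < F θ) :
    F 1 ^ (p / q) ≤ F 0 ^ (p / q) + p * F 0 ^ ((p - q) / q) * A 0 +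
      p * |p - q| * (∫ θ in (0:ℝ)..1, F θ ^ ((p - 2 * q) / q) * A θ ^ 2) +
      p * (q - 1) * (∫ θ in (0:ℝ)..1, F θ ^ ((p - q) / q) * B θ) := by
  have hq0 : q ≠ 0 := by positivity
  have hg (θ) (hθ : θ ∈ Icc (0:ℝ) 1) :
      HasDerivAt (fun θ => F θ ^ (p / q)) (p * F θ ^ ((p - q) / q) * A θ) θ := by
    refine ((hF θ hθ).rpow_const (Or.inl (hFpos θ hθ).ne')).congr_deriv ?_
    rw [show p / q - 1 = (p - q) / q by field_simp]
    field_simp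
  have hg' (θ) (hθ : θ ∈ Icc (0:ℝ) 1) : HasDerivAt (fun θ => p * F θ ^ ((p - q) / q) * A θ)
      (p * (p - q) * (F θ ^ ((p - 2 * q) / q) * A θ ^ 2) +
        p * (q - 1) * (F θ ^ ((p - q) / q) * B θ)) θ := by
    refine ((((hF θ hθ).rpow_const (Or.inl (hFpos θ hθ).ne')).const_mul p).mul
      (hA θ hθ)).congr_deriv ?_
    rw [show (p - q) / q - 1 = (p - 2 * q) / q by field_simp; ring]
    field_simp
  have hFc (c : ℝ) : ContinuousOn (fun θ => F θ ^ c) (Icc 0 1) :=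
    ContinuousOn.rpow_const (fun θ hθ => (hF θ hθ).continuousAt.continuousWithinAt)
      fun θ hθ => Or.inl (hFpos θ hθ).ne'
  have hAc : ContinuousOn A (Icc 0 1) := fun θ hθ => (hA θ hθ).continuousAt.continuousWithinAt
  have h01 : (0:ℝ) ≤ 1 := zero_le_one
  have hI₁ : IntervalIntegrable (fun θ => F θ ^ ((p - 2 * q) / q) * A θ ^ 2) volume 0 1 :=
    ((hFc _).mul (hAc.pow 2)).intervalIntegrable_of_Icc h01
  have hI₂ : IntervalIntegrable (fun θ => F θ ^ ((p - q) / q) * B θ) volume 0 1 :=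
    ((hFc _).mul hB).intervalIntegrable_of_Icc h01
  have key := le_add_mul_deriv_add_integral_of_hasDerivAt h01 hg hg'
    (h := fun θ => p * |p - q| * (F θ ^ ((p - 2 * q) / q) * A θ ^ 2) +
      p * (q - 1) * (F θ ^ ((p - q) / q) * B θ))
    (fun θ hθ => by
      have := Real.rpow_nonneg (hFpos θ (Ioo_subset_Icc_self hθ)).le ((p - 2 * q) / q)
      gcongr
      exact le_abs_self _)
    (fun θ hθ => add_nonneg
      (mul_nonneg (by positivity) (mul_nonneg (Real.rpow_nonneg (hFpos θ hθ).le _) (sq_nonneg _)))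
      (mul_nonneg (by nlinarith) (mul_nonneg (Real.rpow_nonneg (hFpos θ hθ).le _) (hB0 θ hθ))))
    ((hI₁.const_mul _).add (hI₂.const_mul _))
  rw [intervalIntegral.integral_add (hI₁.const_mul _) (hI₂.const_mul _)] at key
  simp only [intervalIntegral.integral_const_mul, sub_zero, one_mul] at key
  linarith

theorem rpow_one_div_rpow_taylor_le (hp : 0 ≤ p) (hq : 1 ≤ q)
    (hF : ∀ θ ∈ Icc (0:ℝ) 1, HasDerivAt F (q * A θ) θ)
    (hA : ∀ θ ∈ Icc (0:ℝ) 1, HasDerivAt A ((q - 1) * B θ) θ)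
    (hB : ContinuousOn B (Icc 0 1)) (hB0 : ∀ θ ∈ Icc (0:ℝ) 1, 0 ≤ B θ)
    (hFpos : ∀ θ ∈ Icc (0:ℝ) 1, 0 < F θ) :
    (F 1 ^ (1 / q)) ^ p ≤ (F 0 ^ (1 / q)) ^ p + p * (F 0 ^ (1 / q)) ^ (p - q) * A 0 +
      p * |p - q| * (∫ θ in (0:ℝ)..1, (F θ ^ (1 / q)) ^ (p - 2 * q) * A θ ^ 2) +
      p * (q - 1) * (∫ θ in (0:ℝ)..1, (F θ ^ (1 / q)) ^ (p - q) * B θ) := by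
  have hpow (θ) (hθ : θ ∈ Icc (0:ℝ) 1) (c : ℝ) : (F θ ^ (1 / q)) ^ c = F θ ^ (c / q) := by
    rw [← Real.rpow_mul (hFpos θ hθ).le, one_div_mul_eq_div]
  have hcongr (c : ℝ) (G : ℝ → ℝ) : ∫ θ in (0:ℝ)..1, (F θ ^ (1 / q)) ^ c * G θ =
      ∫ θ in (0:ℝ)..1, F θ ^ (c / q) * G θ :=
    intervalIntegral.integral_congr fun θ hθ => by
      rw [uIcc_of_le zero_le_one] at hθ
      simp only [hpow θ hθ]
  rw [hcongr, hcongr, hpow 1 (right_mem_Icc.2 zero_le_one), hpow 0 (left_mem_Icc.2 zero_le_one),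
    hpow 0 (left_mem_Icc.2 zero_le_one)]
  exact rpow_div_taylor_le hp hq hF hA hB hB0 hFpos

end RpowTaylor

section ParametricIntegral

variable {S : Type*} [MeasurableSpace S] {μ : Measure S} {q : ℝ}

theorem integrable_abs_rpow_mul_abs_rpow {W V : S → ℝ} (hq : 0 < q)
    (hW : MemLp W (ENNReal.ofReal q) μ) (hV : MemLp V (ENNReal.ofReal q) μ) {r s : ℝ}
    (hr : 0 ≤ r) (hs : 0 ≤ s) (hrs : r + s = q) :
    Integrable (fun x => |W x| ^ r * |V x| ^ s) μ := by
  have hW' := hW.norm_rpow_div (ENNReal.ofReal r)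
  have hV' := hV.norm_rpow_div (ENNReal.ofReal s)
  rw [ENNReal.toReal_ofReal hr] at hW'
  rw [ENNReal.toReal_ofReal hs] at hV'
  have hq0 : ENNReal.ofReal q ≠ 0 := ENNReal.ofReal_ne_zero_iff.2 hq
  have : (ENNReal.ofReal q / ENNReal.ofReal r).HolderConjugate
      (ENNReal.ofReal q / ENNReal.ofReal s) := by
    rw [ENNReal.holderConjugate_iff, ENNReal.inv_div (.inr ENNReal.ofReal_ne_top) (.inr hq0),
      ENNReal.inv_div (.inr ENNReal.ofReal_ne_top) (.inr hq0), ENNReal.div_add_div_same,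
      ← ENNReal.ofReal_add hr hs, hrs, ENNReal.div_self hq0 ENNReal.ofReal_ne_top]
  exact hW'.integrable_mul hV'

variable {Z M : S → ℝ}

theorem MeasureTheory.AEStronglyMeasurable.comp_add_mul_mul_pow (hZ : AEStronglyMeasurable Z μ)
    (hM : AEStronglyMeasurable M μ) {f : ℝ → ℝ} (hf : Measurable f) (θ : ℝ) (j : ℕ) :
    AEStronglyMeasurable (fun x => f (Z x + θ * M x) * M x ^ j) μ :=
  (hf.comp_aemeasurable (hZ.add (hM.const_mul θ)).aemeasurable).aestronglyMeasurable.mul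
    (hM.pow j)

theorem norm_comp_add_mul_mul_pow_le {f : ℝ → ℝ} {c r : ℝ} (hf : ∀ t, |f t| ≤ c * |t| ^ r)
    (hr : 0 ≤ r) {θ C : ℝ} (hθ : |θ| ≤ C) (j : ℕ) (z m : ℝ) :
    ‖f (z + θ * m) * m ^ j‖ ≤ c * (|(|z| + C * |m|)| ^ r * |m| ^ (j : ℝ)) := by
  have hc : 0 ≤ c := by simpa using (abs_nonneg _).trans (hf 1)
  rw [norm_mul, Real.norm_eq_abs, Real.norm_eq_abs, abs_pow, Real.rpow_natCast, ← mul_assoc]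
  gcongr
  exact (hf _).trans (mul_le_mul_of_nonneg_left
    (Real.rpow_le_rpow (abs_nonneg _) ((abs_add_mul_le hθ z m).trans (le_abs_self _)) hr) hc)

theorem integrable_const_mul_abs_add_mul_rpow_mul_rpow (hq : 0 < q)
    (hZ : MemLp Z (ENNReal.ofReal q) μ) (hM : MemLp M (ENNReal.ofReal q) μ) (c C : ℝ) {r : ℝ}
    (hr : 0 ≤ r) {j : ℕ} (hrj : r + j = q) :
    Integrable (fun x => c * (|(|Z x| + C * |M x|)| ^ r * |M x| ^ (j : ℝ))) μ :=
  (integrable_abs_rpow_mul_abs_rpow hq (hZ.norm.add (hM.norm.const_mul C)) hM hr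
    (Nat.cast_nonneg j) hrj).const_mul c

theorem continuous_integral_comp_add_mul_mul_pow (hq : 0 < q)
    (hZ : MemLp Z (ENNReal.ofReal q) μ) (hM : MemLp M (ENNReal.ofReal q) μ) {f : ℝ → ℝ}
    (hfc : Continuous f) {c r : ℝ} (hf : ∀ t, |f t| ≤ c * |t| ^ r) (hr : 0 ≤ r) {j : ℕ}
    (hrj : r + j = q) :
    Continuous fun θ => ∫ x, f (Z x + θ * M x) * M x ^ j ∂μ := by
  refine continuous_iff_continuousAt.2 fun θ₀ => continuousAt_of_dominated
    (.of_forall fun θ => hZ.aestronglyMeasurable.comp_add_mul_mul_pow hM.aestronglyMeasurable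
      hfc.measurable θ j) ?_
    (integrable_const_mul_abs_add_mul_rpow_mul_rpow hq hZ hM c (|θ₀| + 1) hr hrj)
    (.of_forall fun x => by fun_prop)
  filter_upwards [Metric.ball_mem_nhds θ₀ one_pos] with θ hθ
  exact .of_forall fun x => norm_comp_add_mul_mul_pow_le hf hr (abs_le_of_mem_ball hθ) j _ _

theorem hasDerivAt_integral_comp_add_mul_mul_pow (hq : 0 < q)
    (hZ : MemLp Z (ENNReal.ofReal q) μ) (hM : MemLp M (ENNReal.ofReal q) μ) {f f' : ℝ → ℝ}
    (hf : ∀ t, HasDerivAt f (f' t) t) (hf'm : Measurable f') {c c' r : ℝ}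
    (hfb : ∀ t, |f t| ≤ c * |t| ^ (r + 1)) (hf'b : ∀ t, |f' t| ≤ c' * |t| ^ r) (hr : 0 ≤ r)
    {j : ℕ} (hrj : r + 1 + j = q) (θ₀ : ℝ) :
    HasDerivAt (fun θ => ∫ x, f (Z x + θ * M x) * M x ^ j ∂μ)
      (∫ x, f' (Z x + θ₀ * M x) * M x ^ (j + 1) ∂μ) θ₀ := by
  have hfc : Continuous f := continuous_iff_continuousAt.2 fun t => (hf t).continuousAt
  have hmeas {g : ℝ → ℝ} (hg : Measurable g) (θ : ℝ) (k : ℕ) :=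
    hZ.aestronglyMeasurable.comp_add_mul_mul_pow hM.aestronglyMeasurable hg θ k
  have hint : Integrable (fun x => f (Z x + θ₀ * M x) * M x ^ j) μ :=
    (integrable_const_mul_abs_add_mul_rpow_mul_rpow hq hZ hM c |θ₀| (by linarith) hrj).mono'
      (hmeas hfc.measurable θ₀ j)
      (.of_forall fun x => norm_comp_add_mul_mul_pow_le hfb (by linarith) le_rfl j _ _)
  have hderiv (x : S) (θ : ℝ) : HasDerivAt (fun θ => f (Z x + θ * M x) * M x ^ j)
      (f' (Z x + θ * M x) * M x ^ (j + 1)) θ := by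
    refine (((hf _).comp θ (((hasDerivAt_id θ).mul_const (M x)).const_add (Z x))).mul_const
      (M x ^ j)).congr_deriv ?_
    simp only [id_eq, one_mul, pow_succ]
    ring
  have hbound : ∀ᵐ x ∂μ, ∀ θ ∈ Metric.ball θ₀ 1, ‖f' (Z x + θ * M x) * M x ^ (j + 1)‖ ≤
      c' * (|(|Z x| + (|θ₀| + 1) * |M x|)| ^ r * |M x| ^ ((j + 1 : ℕ) : ℝ)) :=
    .of_forall fun x θ hθ =>
      norm_comp_add_mul_mul_pow_le hf'b hr (abs_le_of_mem_ball hθ) (j + 1) _ _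
  have hdom := integrable_const_mul_abs_add_mul_rpow_mul_rpow hq hZ hM c' (|θ₀| + 1) hr
    (j := j + 1) (by push_cast; linarith)
  exact (hasDerivAt_integral_of_dominated_loc_of_deriv_le (Metric.ball_mem_nhds θ₀ one_pos)
    (.of_forall fun θ => hmeas hfc.measurable θ j) hint (hmeas hf'm θ₀ (j + 1)) hbound hdom
    (.of_forall fun x θ _ => hderiv x θ)).2

theorem hasDerivAt_integral_abs_add_mul_rpow (hq : 1 < q) (hZ : MemLp Z (ENNReal.ofReal q) μ)
    (hM : MemLp M (ENNReal.ofReal q) μ) (θ₀ : ℝ) :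
    HasDerivAt (fun θ => ∫ x, |Z x + θ * M x| ^ q ∂μ)
      (q * ∫ x, |Z x + θ₀ * M x| ^ (q - 2) * (Z x + θ₀ * M x) * M x ∂μ) θ₀ := by
  have h := hasDerivAt_integral_comp_add_mul_mul_pow (by linarith) hZ hM
    (fun t => hasDerivAt_abs_rpow t hq) (by fun_prop) (c := 1) (c' := q) (r := q - 1) (j := 0)
    (fun t => by rw [sub_add_cancel, one_mul, abs_of_nonneg (by positivity)])
    (fun t => by
      rw [mul_assoc, abs_mul, abs_abs_rpow_mul_self (by linarith), abs_of_pos (by linarith),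
        show q - 2 + 1 = q - 1 by ring])
    (by linarith) (by simp) θ₀
  simp only [pow_zero, mul_one, zero_add, pow_one] at h
  rw [← integral_const_mul]
  simpa only [mul_assoc] using h

theorem hasDerivAt_integral_abs_add_mul_rpow_sub_two_mul (hq : 2 ≤ q)
    (hZ : MemLp Z (ENNReal.ofReal q) μ) (hM : MemLp M (ENNReal.ofReal q) μ) (θ₀ : ℝ) :
    HasDerivAt (fun θ => ∫ x, |Z x + θ * M x| ^ (q - 2) * (Z x + θ * M x) * M x ∂μ)
      ((q - 1) * ∫ x, |Z x + θ₀ * M x| ^ (q - 2) * M x ^ 2 ∂μ) θ₀ := by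
  have h := hasDerivAt_integral_comp_add_mul_mul_pow (by linarith) hZ hM
    (fun t => hasDerivAt_abs_rpow_mul_self (p := q - 2) (by linarith) t) (by fun_prop)
    (c := 1) (c' := q - 1) (r := q - 2) (j := 1)
    (fun t => by rw [one_mul, abs_abs_rpow_mul_self (by linarith)])
    (fun t => by
      rw [abs_mul, abs_of_nonneg (by linarith), abs_of_nonneg (by positivity),
        show q - 2 + 1 = q - 1 by ring])
    (by linarith) (by push_cast; ring) θ₀
  simp only [pow_one, show q - 2 + 1 = q - 1 by ring] at h
  rw [← integral_const_mul]
  simpa only [mul_assoc] using h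

theorem continuous_integral_abs_add_mul_rpow_sub_two_mul_sq (hq : 2 ≤ q)
    (hZ : MemLp Z (ENNReal.ofReal q) μ) (hM : MemLp M (ENNReal.ofReal q) μ) :
    Continuous fun θ => ∫ x, |Z x + θ * M x| ^ (q - 2) * M x ^ 2 ∂μ :=
  continuous_integral_comp_add_mul_mul_pow (by linarith) hZ hM
    (continuous_abs.rpow_const fun _ => Or.inr (by linarith)) (c := 1) (r := q - 2)
    (fun t => by rw [one_mul, abs_of_nonneg (by positivity)]) (by linarith) (by push_cast; ring)

end ParametricIntegral

theorem lq_norm_pow_taylor_inequality_general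
    (S : Type*) [MeasurableSpace S] (μ : Measure S)
    (q p : ℝ) (hq2 : 2 ≤ q) (hp2 : 2 < p)
    (Z M : S → ℝ)
    (hZ : MemLp Z (ENNReal.ofReal q) μ) (hM : MemLp M (ENNReal.ofReal q) μ)
    (hpos : ∀ θ ∈ Set.Icc (0:ℝ) 1, 0 < (∫ x, |Z x + θ * M x| ^ q ∂μ) ^ (1 / q)) :
    ((∫ x, |Z x + M x| ^ q ∂μ) ^ (1 / q)) ^ p ≤
      ((∫ x, |Z x| ^ q ∂μ) ^ (1 / q)) ^ p +
        p * ((∫ x, |Z x| ^ q ∂μ) ^ (1 / q)) ^ (p - q) *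
          (∫ x, |Z x| ^ (q - 2) * Z x * M x ∂μ) +
        p * |p - q| *
          (∫ θ in (0:ℝ)..1,
            ((∫ x, |Z x + θ * M x| ^ q ∂μ) ^ (1 / q)) ^ (p - 2 * q) *
              (∫ x, |Z x + θ * M x| ^ (q - 2) * (Z x + θ * M x) * M x ∂μ) ^ 2) +
        p * (q - 1) *
          (∫ θ in (0:ℝ)..1,
            ((∫ x, |Z x + θ * M x| ^ q ∂μ) ^ (1 / q)) ^ (p - q) *
              ∫ x, |Z x + θ * M x| ^ (q - 2) * (M x) ^ 2 ∂μ) := by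
  have hq1 : 1 < q := by linarith
  have hF_pos (θ : ℝ) (hθ : θ ∈ Icc (0:ℝ) 1) : 0 < ∫ x, |Z x + θ * M x| ^ q ∂μ :=
    (integral_nonneg fun x => by positivity).lt_of_ne fun h =>
      (hpos θ hθ).ne' (by rw [← h, Real.zero_rpow (by positivity)])
  simpa using rpow_one_div_rpow_taylor_le (by linarith) hq1.le
    (fun θ _ => hasDerivAt_integral_abs_add_mul_rpow hq1 hZ hM θ)
    (fun θ _ => hasDerivAt_integral_abs_add_mul_rpow_sub_two_mul hq2 hZ hM θ)
    (continuous_integral_abs_add_mul_rpow_sub_two_mul_sq hq2 hZ hM).continuousOn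
    (fun θ _ => integral_nonneg fun x => by positivity) hF_pos

/-- Second-order Taylor inequality for `g(θ) = ‖Z + θM‖_{L^q}^p`, used to control the
discrete stochastic convolution: if `‖Z + θM‖_{L^q} > 0` for every `θ ∈ [0,1]`, then
`‖Z + M‖^p ≤ ‖Z‖^p + p ‖Z‖^{p−q} ⟨|Z|^{q−2}Z, M⟩
  + p|p−q| ∫₀¹ ‖Z + θM‖^{p−2q} ⟨|Z + θM|^{q−2}(Z + θM), M⟩² dθ
  + p(q−1) ∫₀¹ ‖Z + θM‖^{p−q} ⟨|Z + θM|^{q−2}, M²⟩ dθ`. -/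
theorem lq_norm_pow_taylor_inequality
    (S : Type*) [MeasurableSpace S] (μ : Measure S) [SigmaFinite μ]
    (q p : ℝ) (hq2 : 2 ≤ q) (hp2 : 2 < p)
    (Z M : S → ℝ)
    (hZ : MemLp Z (ENNReal.ofReal q) μ) (hM : MemLp M (ENNReal.ofReal q) μ)
    (hpos : ∀ θ ∈ Set.Icc (0:ℝ) 1, 0 < (∫ x, |Z x + θ * M x| ^ q ∂μ) ^ (1 / q)) :
    ((∫ x, |Z x + M x| ^ q ∂μ) ^ (1 / q)) ^ p ≤
      ((∫ x, |Z x| ^ q ∂μ) ^ (1 / q)) ^ p +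
        p * ((∫ x, |Z x| ^ q ∂μ) ^ (1 / q)) ^ (p - q) *
          (∫ x, |Z x| ^ (q - 2) * Z x * M x ∂μ) +
        p * |p - q| *
          (∫ θ in (0:ℝ)..1,
            ((∫ x, |Z x + θ * M x| ^ q ∂μ) ^ (1 / q)) ^ (p - 2 * q) *
              (∫ x, |Z x + θ * M x| ^ (q - 2) * (Z x + θ * M x) * M x ∂μ) ^ 2) +
        p * (q - 1) *
          (∫ θ in (0:ℝ)..1,
            ((∫ x, |Z x + θ * M x| ^ q ∂μ) ^ (1 / q)) ^ (p - q) *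
              ∫ x, |Z x + θ * M x| ^ (q - 2) * (M x) ^ 2 ∂μ) :=
  lq_norm_pow_taylor_inequality_general S μ q p hq2 hp2 Z M hZ hM hpos
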